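/- arXiv:1704.06541 — 2 statements merged into one kernel-verified Lean document; each statement's English description precedes it below -/
import Mathlib

section
/- In the hyperbolic plane ℍ², for any three distinct points x, y, z, every complete geodesic g that meets the closed segment [x,y] and is not equal to the geodesic through x and y either meets the closed segment [x,z] (and differs from the geodesic through x,z) or meets the closed segment [z,y] (and differs from the geodesic through z,y). Equivalently, with T[x,y] denoting the set of geodesics transverse to [x,y] (meeting it, including endpoints, but excluding the geodesic through x and y), one has T[x,y] ⊆ T[x,z] ∪ T[z,y]. -/
/-!
In the Klein model geodesics are chords, so everything reduces to affine geometry of the plane.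
A line `L` is the zero set of a nonconstant affine function `f`, and `L` meets the segment
`[u, v]` iff `0` lies between `f u` and `f v`; since `[f x, f y] ⊆ [f x, f z] ∪ [f z, f y]`,
a line meeting `[x, y]` meets `[x, z]` or `[z, y]`. If it meets `[x, z]` but is the line `xz`,
then it contains `z` but not `y` (otherwise it would be the line `xy`), so it is transverse
to `[z, y]`.
-/

open Module Set

section Hyperplane

variable {K V : Type*} [Field K] [AddCommGroup V] [Module K V] [FiniteDimensional K V]

theorem AffineSubspace.exists_affineMap_mem_iff_eq_zero {s : AffineSubspace K V} {p₀ : V}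
    (hp₀ : p₀ ∈ s) (hs : finrank K s.direction + 1 = finrank K V) :
    ∃ f : V →ᵃ[K] K, ∀ p, p ∈ s ↔ f p = 0 := by
  have hlt : s.direction < ⊤ := by
    refine lt_top_iff_ne_top.mpr fun htop => ?_
    rw [htop, finrank_top] at hs
    omega
  obtain ⟨φ, hφ, hle⟩ := s.direction.exists_le_ker_of_lt_top hlt
  have hker : LinearMap.ker φ = s.direction :=
    (Submodule.eq_of_le_of_finrank_eq hle
      (by have := Module.Dual.finrank_ker_add_one_of_ne_zero hφ; omega)).symm
  refine ⟨φ.toAffineMap - AffineMap.const K V (φ p₀), fun p => ?_⟩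
  rw [← AffineSubspace.vsub_right_mem_direction_iff_mem hp₀, ← hker]
  simp [sub_eq_zero]

end Hyperplane

theorem finrank_direction_affineSpan_pair {K V P : Type*} [DivisionRing K] [AddCommGroup V]
    [Module K V] [AddTorsor V P] {a b : P} (hab : a ≠ b) :
    finrank K (line[K, a, b]).direction = 1 := by
  rw [direction_affineSpan, vectorSpan_pair, finrank_span_singleton (vsub_ne_zero.mpr hab)]

section Segment

variable {𝕜 E : Type*} [Field 𝕜] [LinearOrder 𝕜] [IsStrictOrderedRing 𝕜]
  [AddCommGroup E] [Module 𝕜 E]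

theorem AffineMap.exists_mem_segment_eq_zero_iff (f : E →ᵃ[𝕜] 𝕜) (x y : E) :
    (∃ p ∈ segment 𝕜 x y, f p = 0) ↔ (0 : 𝕜) ∈ uIcc (f x) (f y) := by
  rw [← segment_eq_uIcc, ← image_segment]
  rfl

theorem AffineSubspace.inter_segment_nonempty_or_of_finrank_direction_add_one
    [FiniteDimensional 𝕜 E] {s : AffineSubspace 𝕜 E} (hs : finrank 𝕜 s.direction + 1 = finrank 𝕜 E)
    {x y : E} (z : E) (h : ((s : Set E) ∩ segment 𝕜 x y).Nonempty) :
    ((s : Set E) ∩ segment 𝕜 x z).Nonempty ∨ ((s : Set E) ∩ segment 𝕜 z y).Nonempty := by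
  obtain ⟨p₀, hp₀, -⟩ := id h
  obtain ⟨f, hf⟩ := s.exists_affineMap_mem_iff_eq_zero hp₀ hs
  have hmeets : ∀ u v, ((s : Set E) ∩ segment 𝕜 u v).Nonempty ↔ (0 : 𝕜) ∈ uIcc (f u) (f v) := by
    intro u v
    rw [← f.exists_mem_segment_eq_zero_iff]
    exact exists_congr fun p => by rw [mem_inter_iff, SetLike.mem_coe, hf, and_comm]
  simp only [hmeets] at h ⊢
  exact uIcc_subset_uIcc_union_uIcc h

end Segment

section Transverse

variable {𝕜 E : Type*} [DivisionRing 𝕜] [PartialOrder 𝕜] [AddCommGroup E] [Module 𝕜 E]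

-- `L ∈ T[x, y]` in the paper.
def IsTransverse (L : AffineSubspace 𝕜 E) (x y : E) : Prop :=
  ((L : Set E) ∩ segment 𝕜 x y).Nonempty ∧ L ≠ line[𝕜, x, y]

theorem IsTransverse.symm {L : AffineSubspace 𝕜 E} {x y : E} (h : IsTransverse L x y) :
    IsTransverse L y x := by
  rwa [IsTransverse, segment_symm, Set.pair_comm]

theorem isTransverse_or_of_inter_segment_nonempty [IsOrderedRing 𝕜] {a b x y z : E}
    (hxy : x ≠ y) (hne : line[𝕜, a, b] ≠ line[𝕜, x, y])
    (h : ((line[𝕜, a, b] : Set E) ∩ segment 𝕜 x z).Nonempty) :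
    IsTransverse line[𝕜, a, b] x z ∨ IsTransverse line[𝕜, a, b] z y := by
  by_cases hxz : line[𝕜, a, b] = line[𝕜, x, z]
  · have hzL : z ∈ line[𝕜, a, b] := hxz ▸ right_mem_affineSpan_pair 𝕜 x z
    have hyL : y ∉ line[𝕜, a, b] := fun hyL =>
      hne (affineSpan_pair_eq_of_mem_of_mem_of_ne
        (hxz ▸ left_mem_affineSpan_pair 𝕜 x z) hyL hxy).symm
    exact Or.inr ⟨⟨z, hzL, left_mem_segment 𝕜 z y⟩,
      fun hzy => hyL (hzy ▸ right_mem_affineSpan_pair 𝕜 z y)⟩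
  · exact Or.inl ⟨h, hxz⟩

end Transverse

theorem stmt1_general (x y z : EuclideanSpace ℝ (Fin 2))
    (hxy : x ≠ y)
    (L : AffineSubspace ℝ (EuclideanSpace ℝ (Fin 2)))
    (hL : ∃ a b : EuclideanSpace ℝ (Fin 2), a ≠ b ∧ L = affineSpan ℝ {a, b})
    (hmeets : ((L : Set (EuclideanSpace ℝ (Fin 2))) ∩ segment ℝ x y).Nonempty)
    (hne : L ≠ affineSpan ℝ {x, y}) :
    (((L : Set (EuclideanSpace ℝ (Fin 2))) ∩ segment ℝ x z).Nonempty
        ∧ L ≠ affineSpan ℝ {x, z}) ∨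
    (((L : Set (EuclideanSpace ℝ (Fin 2))) ∩ segment ℝ z y).Nonempty
        ∧ L ≠ affineSpan ℝ {z, y}) := by
  obtain ⟨a, b, hab, rfl⟩ := hL
  have hline :
      finrank ℝ (line[ℝ, a, b]).direction + 1 = finrank ℝ (EuclideanSpace ℝ (Fin 2)) := by
    rw [finrank_direction_affineSpan_pair hab, finrank_euclideanSpace_fin]
  rcases AffineSubspace.inter_segment_nonempty_or_of_finrank_direction_add_one hline z hmeets
    with hxz | hzy
  · exact isTransverse_or_of_inter_segment_nonempty hxy hne hxz
  · rw [segment_symm] at hzy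
    rw [Set.pair_comm x y] at hne
    exact (isTransverse_or_of_inter_segment_nonempty hxy.symm hne hzy).symm.imp
      IsTransverse.symm IsTransverse.symm

/-- In the Klein model of the hyperbolic plane (the open unit disk of the
Euclidean plane, where hyperbolic geodesics are chords, i.e. intersections of affine
lines with the open disk, and hyperbolic segments are Euclidean segments), for any
three pairwise distinct points `x, y, z` in the disk, every geodesic line `L` (an
affine line meeting the open disk) that meets the closed segment `[x,y]` and differs
from the line through `x` and `y` either meets `[x,z]` and differs from the line
through `x,z`, or meets `[z,y]` and differs from the line through `z,y`.
Equivalently, `T[x,y] ⊆ T[x,z] ∪ T[z,y]`. -/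
theorem stmt1 (x y z : EuclideanSpace ℝ (Fin 2))
    (hx : ‖x‖ < 1) (hy : ‖y‖ < 1) (hz : ‖z‖ < 1)
    (hxy : x ≠ y) (hxz : x ≠ z) (hzy : z ≠ y)
    (L : AffineSubspace ℝ (EuclideanSpace ℝ (Fin 2)))
    (hL : ∃ a b : EuclideanSpace ℝ (Fin 2), a ≠ b ∧ L = affineSpan ℝ {a, b})
    (hLdisk : ∃ p ∈ (L : Set (EuclideanSpace ℝ (Fin 2))), ‖p‖ < 1)
    (hmeets : ((L : Set (EuclideanSpace ℝ (Fin 2))) ∩ segment ℝ x y).Nonempty)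
    (hne : L ≠ affineSpan ℝ {x, y}) :
    (((L : Set (EuclideanSpace ℝ (Fin 2))) ∩ segment ℝ x z).Nonempty
        ∧ L ≠ affineSpan ℝ {x, z}) ∨
    (((L : Set (EuclideanSpace ℝ (Fin 2))) ∩ segment ℝ z y).Nonempty
        ∧ L ≠ affineSpan ℝ {z, y}) :=
  stmt1_general x y z hxy L hL hmeets hne
end

section
/- Let Γ be a discrete cocompact group of isometries of ℍ² with systole s > 0 (every nontrivial element moves every point by at least s). Let γ ∈ Γ be hyperbolic with axis A_γ and translation length ℓ(γ), and fix a fundamental domain segment I ⊂ A_γ of length ℓ(γ) for the action of γ on A_γ. Fix p ∈ ℍ² and r = s/4. Then the number of conjugates g = βγβ⁻¹ of γ whose axis β(A_γ) comes within distance r of p is at most 2ℓ(γ)/s + 1, i.e., is bounded linearly in ℓ(γ). -/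
/-- Let `Γ` be a group of isometries of a metric space `X` (ℍ²) with
systole bound `s > 0`.  Let `γ ∈ Γ` with translation length `ℓ ≥ 0`, and let
`c : [0,ℓ] → X` be a geodesic parametrization of a fundamental segment `I` of the
axis of `γ`.  Then the number of conjugates `g = βγβ⁻¹` of `γ` whose axis comes
within distance `r = s/4` of `p` — i.e. for which there are `n ∈ ℤ` and `q ∈ I`
with `d(βγⁿ q, p) < r` — is at most `2ℓ/s + 1`. -/
theorem stmt7 {X : Type*} [MetricSpace X] {Γ : Type*} [Group Γ] [MulAction Γ X]
    (hiso : ∀ (γ : Γ) (x y : X), dist (γ • x) (γ • y) = dist x y)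
    (s : ℝ) (hs : 0 < s)
    (hsys : ∀ h : Γ, h ≠ 1 → ∀ q : X, s ≤ dist (h • q) q)
    (γ : Γ) (ℓ : ℝ) (hℓ : 0 ≤ ℓ)
    (c : ℝ → X)
    (hgeo : ∀ t ∈ Set.Icc (0:ℝ) ℓ, ∀ t' ∈ Set.Icc (0:ℝ) ℓ,
      dist (c t) (c t') = |t - t'|)
    (p : X) :
    (Nat.card {g : Γ | ∃ β : Γ, g = β * γ * β⁻¹ ∧
        ∃ n : ℤ, ∃ t ∈ Set.Icc (0:ℝ) ℓ,
          dist ((β * γ ^ n) • c t) p < s / 4} : ℝ)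
      ≤ 2 * ℓ / s + 1 := by
  set S : Set Γ := {g : Γ | ∃ β : Γ, g = β * γ * β⁻¹ ∧
        ∃ n : ℤ, ∃ t ∈ Set.Icc (0:ℝ) ℓ,
          dist ((β * γ ^ n) • c t) p < s / 4} with hS
  have hrhs0 : (0:ℝ) ≤ 2 * ℓ / s + 1 := by positivity
  by_cases hfin : Finite S
  swap
  · haveI : Infinite S := not_finite_iff_infinite.mp hfin
    rw [Nat.card_eq_zero_of_infinite (α := S)]
    simpa using hrhs0
  -- choose witnesses
  have hwit : ∀ x : S, ∃ β : Γ, (x : Γ) = β * γ * β⁻¹ ∧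
      ∃ n : ℤ, ∃ t ∈ Set.Icc (0:ℝ) ℓ,
        dist ((β * γ ^ n) • c t) p < s / 4 := fun x => x.2
  choose β hβ n t ht hd using hwit
  -- separation
  have hsep : ∀ x y : S, x ≠ y → s / 2 < |t x - t y| := by
    intro x y hxy
    set h : Γ := (β x * γ ^ n x)⁻¹ * (β y * γ ^ n y) with hh
    have hdist : dist (c (t x)) (h • c (t y)) < s / 2 := by
      have h1 : dist ((β x * γ ^ n x) • c (t x)) ((β y * γ ^ n y) • c (t y)) < s / 2 := by
        calc dist ((β x * γ ^ n x) • c (t x)) ((β y * γ ^ n y) • c (t y))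
            ≤ dist ((β x * γ ^ n x) • c (t x)) p
              + dist ((β y * γ ^ n y) • c (t y)) p := dist_triangle_right _ _ _
          _ < s / 4 + s / 4 := add_lt_add (hd x) (hd y)
          _ = s / 2 := by ring
      calc dist (c (t x)) (h • c (t y))
          = dist ((β x * γ ^ n x) • c (t x)) ((β x * γ ^ n x) • (h • c (t y))) :=
            (hiso _ _ _).symm
        _ = dist ((β x * γ ^ n x) • c (t x)) ((β y * γ ^ n y) • c (t y)) := by
            rw [hh, smul_smul, mul_inv_cancel_left]
        _ < s / 2 := h1
    have hne : h ≠ 1 := by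
      intro h1
      apply hxy
      rw [hh, inv_mul_eq_one] at h1
      have hβy : β y = β x * γ ^ n x * (γ ^ n y)⁻¹ := by
        rw [eq_mul_inv_iff_mul_eq]
        exact h1.symm
      apply Subtype.ext
      rw [hβ x, hβ y, hβy]
      group
    have hsysle : s ≤ dist (h • c (t y)) (c (t y)) := hsys h hne _
    have htri : dist (h • c (t y)) (c (t y)) ≤
        dist (h • c (t y)) (c (t x)) + dist (c (t x)) (c (t y)) := dist_triangle _ _ _
    have hgeq : dist (c (t x)) (c (t y)) = |t x - t y| := hgeo _ (ht x) _ (ht y)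
    have : s < s / 2 + |t x - t y| := by
      calc s ≤ dist (h • c (t y)) (c (t y)) := hsysle
        _ ≤ dist (h • c (t y)) (c (t x)) + dist (c (t x)) (c (t y)) := htri
        _ = dist (c (t x)) (h • c (t y)) + |t x - t y| := by rw [dist_comm, hgeq]
        _ < s / 2 + |t x - t y| := by linarith [hdist]
    linarith
  -- map to integers
  set m : ℤ := ⌊2 * ℓ / s⌋ with hm
  have hm0 : 0 ≤ m := Int.floor_nonneg.2 (by positivity)
  have hmap : ∀ x : S, ⌊2 * t x / s⌋ ∈ Set.Icc (0 : ℤ) m := by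
    intro x
    constructor
    · exact Int.floor_nonneg.2 (by
        have := (ht x).1; positivity)
    · apply Int.floor_le_floor
      gcongr
      exact (ht x).2
  have hinj : Function.Injective (fun x : S => (⟨⌊2 * t x / s⌋, hmap x⟩ :
      Set.Icc (0:ℤ) m)) := by
    intro x y hxyeq
    by_contra hxy
    have hfl : ⌊2 * t x / s⌋ = ⌊2 * t y / s⌋ := by
      simpa using congrArg Subtype.val hxyeq
    have h1 : |2 * t x / s - 2 * t y / s| < 1 :=
      Int.abs_sub_lt_one_of_floor_eq_floor hfl
    have h2 : 2 * t x / s - 2 * t y / s = (2 / s) * (t x - t y) := by ring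
    have h3 : |t x - t y| < s / 2 := by
      rw [h2, abs_mul, abs_of_pos (by positivity : (0:ℝ) < 2 / s)] at h1
      calc |t x - t y| = (s / 2) * ((2 / s) * |t x - t y|) := by
            field_simp
        _ < (s / 2) * 1 := by
            apply mul_lt_mul_of_pos_left h1 (by positivity)
        _ = s / 2 := mul_one _
    exact absurd h3 (not_lt.2 (le_of_lt (hsep x y hxy)))
  have hcard : Nat.card S ≤ Nat.card (Set.Icc (0:ℤ) m) :=
    Nat.card_le_card_of_injective _ hinj
  have hIcc : Nat.card (Set.Icc (0:ℤ) m) = (m + 1).toNat := by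
    rw [← Finset.coe_Icc, Nat.card_coe_set_eq, Set.ncard_coe_finset, Int.card_Icc]
    simp
  have hfinal : (Nat.card S : ℝ) ≤ (m : ℝ) + 1 := by
    rw [hIcc] at hcard
    have h1 : ((Nat.card S : ℤ) : ℝ) ≤ (((m+1).toNat : ℤ) : ℝ) := by
      exact_mod_cast hcard
    rw [Int.toNat_of_nonneg (by linarith)] at h1
    push_cast at h1
    linarith
  calc (Nat.card S : ℝ) ≤ (m : ℝ) + 1 := hfinal
    _ ≤ 2 * ℓ / s + 1 := by
        have := Int.floor_le (2 * ℓ / s)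
        linarith
end
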